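/- Let a > 100 be an integer. Every solution (u₁, u₂, n) to the unit equation is equivalent to a solution (v₁, v₂, m) for which there exist integers x₁, y₁, x₂, y₂ and s ∈ {1,-1} with v₁ = ε^{x₁}·δ^{y₁}, v₂ = s·ε^{x₂}·δ^{y₂}, and |v₂| ≥ a^{X/2} where X = max{|x₁|, |x₂|, |y₁|, |y₂|}, with strict inequality |v₂| > a^{X/2} whenever X ≥ 1. -/

import Mathlib

/-!
The automorphism `σ : ρ ↦ -1 - 1/ρ` of `K` has order three, preserves `ℤ[ρ]` and maps
`±ε^x δ^y` to `±ε^(-y) δ^(x-y)`. Hence the logarithms of the absolute values of the three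
conjugates of `±ε^x δ^y` are the values of `ℓ(p, q) = p log ε + q log δ` on the orbit
`(x, y), (-y, x - y), (y - x, -x)`. Swapping and conjugating, we may assume that `|v₂|` is the
largest absolute value among the six conjugates of `v₁` and `v₂`; the three inequalities
`ℓ ≤ log |v₂|` on an orbit force `max(|x|, |y|) (log ε - log δ) ≤ 2 log |v₂|`, and
`log ε - log δ > log a` because `a δ < ε`. A final change of signs makes `v₁` positive.
-/

open IntermediateField

noncomputable section

/-- The generator `ρ` of `K = ℚ(ρ) ⊆ ℝ` as an element of the intermediate field. -/
def rhoGen (ρ : ℝ) : ℚ⟮ρ⟯ := AdjoinSimple.gen ℚ ρ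

/-- The order `ℤ[ρ]` inside `K = ℚ(ρ)`. -/
def Zrho (ρ : ℝ) : Subalgebra ℤ ℚ⟮ρ⟯ := Algebra.adjoin ℤ {rhoGen ρ}

/-- `u` is a unit of the order `ℤ[ρ]`. -/
def IsZrhoUnit (ρ : ℝ) (u : ℚ⟮ρ⟯) : Prop :=
  u ∈ Zrho ρ ∧ ∃ v ∈ Zrho ρ, u * v = 1

/-- A solution of the unit equation: `u₁, u₂` are units of `ℤ[ρ]`, `n ∈ ℤ`,
`|n| ≤ a^{1/3}` and `u₁ + u₂ = n`. -/
def IsSolution (a : ℤ) (ρ : ℝ) (u₁ u₂ : ℚ⟮ρ⟯) (n : ℤ) : Prop :=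
  IsZrhoUnit ρ u₁ ∧ IsZrhoUnit ρ u₂ ∧
    |(n : ℝ)| ≤ (a : ℝ) ^ ((1 : ℝ) / 3) ∧ u₁ + u₂ = (n : ℚ⟮ρ⟯)

/-- One elementary operation on solution triples: change of signs, swap of the two
units, or application of an element of `Gal(K/ℚ)`. -/
inductive SolStep (ρ : ℝ) : ℚ⟮ρ⟯ × ℚ⟮ρ⟯ × ℤ → ℚ⟮ρ⟯ × ℚ⟮ρ⟯ × ℤ → Prop
  | neg (u₁ u₂ : ℚ⟮ρ⟯) (n : ℤ) : SolStep ρ (u₁, u₂, n) (-u₁, -u₂, -n)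
  | swap (u₁ u₂ : ℚ⟮ρ⟯) (n : ℤ) : SolStep ρ (u₁, u₂, n) (u₂, u₁, n)
  | galois (τ : ℚ⟮ρ⟯ ≃ₐ[ℚ] ℚ⟮ρ⟯) (u₁ u₂ : ℚ⟮ρ⟯) (n : ℤ) :
      SolStep ρ (u₁, u₂, n) (τ u₁, τ u₂, n)

/-- Two solution triples are equivalent if one is obtained from the other by a
combination of the elementary operations. -/
def SolEquiv (ρ : ℝ) : ℚ⟮ρ⟯ × ℚ⟮ρ⟯ × ℤ → ℚ⟮ρ⟯ × ℚ⟮ρ⟯ × ℤ → Prop :=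
  Relation.ReflTransGen (SolStep ρ)

/-- A solution triple is trivial if it is equivalent to `(1,1,2)`, to `(u,-u,0)`
for some unit `u` of `ℤ[ρ]`, or to `(ρ+1, -ρ, 1)`. -/
def IsTrivialSolution (ρ : ℝ) (u₁ u₂ : ℚ⟮ρ⟯) (n : ℤ) : Prop :=
  SolEquiv ρ (u₁, u₂, n) (1, 1, 2) ∨
  (∃ u : ℚ⟮ρ⟯, IsZrhoUnit ρ u ∧ SolEquiv ρ (u₁, u₂, n) (u, -u, 0)) ∨
  SolEquiv ρ (u₁, u₂, n) (rhoGen ρ + 1, -(rhoGen ρ), 1)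

end

open Polynomial

namespace SimplestCubic

/-- Shanks' simplest cubic `f_a`. -/
noncomputable def shanksPoly (a : ℤ) : ℤ[X] := X ^ 3 - C a * X ^ 2 - C (a + 3) * X - 1

theorem shanksPoly_monic (a : ℤ) : (shanksPoly a).Monic := by
  unfold shanksPoly; monicity!

theorem shanksPoly_natDegree (a : ℤ) : (shanksPoly a).natDegree = 3 := by
  unfold shanksPoly; compute_degree!

theorem aeval_shanksPoly {R : Type*} [CommRing R] (a : ℤ) (x : R) :
    aeval x (shanksPoly a) = x ^ 3 - a * x ^ 2 - (a + 3) * x - 1 := by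
  simp [shanksPoly, map_ofNat]

theorem irreducible_shanksPoly_map (a : ℤ) :
    Irreducible ((shanksPoly a).map (algebraMap ℤ ℚ)) := by
  have hdeg : ((shanksPoly a).map (algebraMap ℤ ℚ)).natDegree = 3 := by
    rw [(shanksPoly_monic a).natDegree_map, shanksPoly_natDegree]
  rw [irreducible_iff_roots_eq_zero_of_degree_le_three (by omega) (by omega),
    Multiset.eq_zero_iff_forall_notMem]
  intro r hr
  have hr : aeval r (shanksPoly a) = 0 := by
    rwa [mem_roots ((shanksPoly_monic a).map _).ne_zero, IsRoot, eval_map_algebraMap] at hr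
  obtain ⟨n, rfl⟩ := isInteger_of_is_root_of_monic (shanksPoly_monic a) hr
  have hn : n ^ 3 - a * n ^ 2 - (a + 3) * n - 1 = 0 := by
    rwa [aeval_algebraMap_apply, aeval_shanksPoly,
      map_eq_zero_iff _ (algebraMap ℤ ℚ).injective_int] at hr
  have hunit : IsUnit n := isUnit_of_dvd_one ⟨n ^ 2 - a * n - (a + 3), by linear_combination -hn⟩
  rcases Int.isUnit_iff.mp hunit with rfl | rfl <;> omega

section Field

variable {F : Type*} [Field F]

theorem ne_zero_and_add_one_ne_zero_of_aeval_shanksPoly {a : ℤ} {t : F}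
    (ht : aeval t (shanksPoly a) = 0) : t ≠ 0 ∧ t + 1 ≠ 0 := by
  rw [aeval_shanksPoly] at ht
  constructor
  · rintro rfl
    exact one_ne_zero (by linear_combination -ht : (1 : F) = 0)
  · intro h
    rw [eq_neg_of_add_eq_zero_left h] at ht
    exact one_ne_zero (by linear_combination ht : (1 : F) = 0)

theorem aeval_shanksPoly_neg_one_sub_inv (a : ℤ) {t : F} (ht : t ≠ 0) :
    aeval (-1 - t⁻¹) (shanksPoly a) = aeval t (shanksPoly a) / t ^ 3 := by
  rw [aeval_shanksPoly, aeval_shanksPoly]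
  field_simp
  ring

end Field

theorem neg_one_sub_inv_iterate_three {F : Type*} [Field F] {t : F} (h0 : t ≠ 0)
    (h1 : t + 1 ≠ 0) : -1 - (-1 - (-1 - t⁻¹)⁻¹)⁻¹ = t := by
  have h2 : -1 - t⁻¹ = -((t + 1) / t) := by field_simp; ring
  rw [h2, inv_neg, inv_div, sub_neg_eq_add]
  have h3 : -1 + t / (t + 1) = -(t + 1)⁻¹ := by field_simp; ring
  rw [h3, inv_neg, inv_inv]
  ring

section Galois

variable {E : Type*} [Field E] [CharZero E] {a : ℤ} {α : E}

theorem minpoly_eq_shanksPoly (h : aeval α (shanksPoly a) = 0) :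
    minpoly ℚ α = (shanksPoly a).map (algebraMap ℤ ℚ) :=
  (minpoly.eq_of_irreducible_of_monic (irreducible_shanksPoly_map a)
    (by rwa [aeval_map_algebraMap]) ((shanksPoly_monic a).map _)).symm

theorem isIntegral_of_aeval_shanksPoly (h : aeval α (shanksPoly a) = 0) : IsIntegral ℚ α :=
  IsIntegral.tower_top (⟨shanksPoly a, shanksPoly_monic a, h⟩ : IsIntegral ℤ α)

theorem aeval_gen_shanksPoly (h : aeval α (shanksPoly a) = 0) :
    aeval (AdjoinSimple.gen ℚ α) (shanksPoly a) = 0 := by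
  rw [aeval_shanksPoly] at h ⊢
  apply Subtype.ext
  push_cast
  exact h

theorem exists_algEquiv_gen_eq_neg_one_sub_inv (h : aeval α (shanksPoly a) = 0) :
    ∃ σ : ℚ⟮α⟯ ≃ₐ[ℚ] ℚ⟮α⟯, σ (AdjoinSimple.gen ℚ α) = -1 - (AdjoinSimple.gen ℚ α)⁻¹ := by
  have hint := isIntegral_of_aeval_shanksPoly h
  have : FiniteDimensional ℚ ℚ⟮α⟯ := adjoin.finiteDimensional hint
  have hg := aeval_gen_shanksPoly h
  have hroot : aeval (-1 - (AdjoinSimple.gen ℚ α)⁻¹)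
      (minpoly ℚ (adjoin.powerBasis hint).gen) = 0 := by
    rw [adjoin.powerBasis_gen, minpoly_eq_shanksPoly hg, aeval_map_algebraMap,
      aeval_shanksPoly_neg_one_sub_inv a (ne_zero_and_add_one_ne_zero_of_aeval_shanksPoly hg).1,
      hg, zero_div]
  let φ : ℚ⟮α⟯ →ₐ[ℚ] ℚ⟮α⟯ := (adjoin.powerBasis hint).lift _ hroot
  exact ⟨AlgEquiv.ofBijective φ φ.bijective, (adjoin.powerBasis hint).lift_gen _ hroot⟩

theorem algEquiv_pow_three_eq_one (h : aeval α (shanksPoly a) = 0) (σ : ℚ⟮α⟯ ≃ₐ[ℚ] ℚ⟮α⟯)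
    (hσ : σ (AdjoinSimple.gen ℚ α) = -1 - (AdjoinSimple.gen ℚ α)⁻¹) : σ ^ 3 = 1 := by
  obtain ⟨h0, h1⟩ := ne_zero_and_add_one_ne_zero_of_aeval_shanksPoly (aeval_gen_shanksPoly h)
  have hext : ((σ ^ 3 : ℚ⟮α⟯ ≃ₐ[ℚ] ℚ⟮α⟯) : ℚ⟮α⟯ →ₐ[ℚ] ℚ⟮α⟯) = AlgHom.id ℚ ℚ⟮α⟯ := by
    refine (adjoin.powerBasis (isIntegral_of_aeval_shanksPoly h)).algHom_ext ?_
    change (σ ^ 3) (AdjoinSimple.gen ℚ α) = AdjoinSimple.gen ℚ α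
    simp only [pow_succ, pow_zero, one_mul, AlgEquiv.mul_apply, hσ, map_sub, map_neg, map_one,
      map_inv₀]
    exact neg_one_sub_inv_iterate_three h0 h1
  exact AlgEquiv.ext fun z => DFunLike.congr_fun hext z

end Galois

section Order

variable {F : Type*} [Field F] {a : ℤ} {t : F}

theorem inv_mem_adjoin_of_aeval_shanksPoly (ht : aeval t (shanksPoly a) = 0) :
    t⁻¹ ∈ Algebra.adjoin ℤ {t} := by
  rw [aeval_shanksPoly] at ht
  have hinv : t⁻¹ = t ^ 2 - a * t - (a + 3) :=
    inv_eq_of_mul_eq_one_right (by linear_combination ht)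
  have ht : t ∈ Algebra.adjoin ℤ {t} := Algebra.self_mem_adjoin_singleton ℤ t
  have ha : (a : F) ∈ Algebra.adjoin ℤ {t} := intCast_mem _ a
  rw [hinv]
  exact sub_mem (sub_mem (pow_mem ht 2) (mul_mem ha ht)) (add_mem ha (ofNat_mem _ 3))

theorem map_mem_adjoin_of_aeval_shanksPoly (ht : aeval t (shanksPoly a) = 0) (σ : F →+* F)
    (hσ : σ t = -1 - t⁻¹) {z : F} (hz : z ∈ Algebra.adjoin ℤ {t}) :
    σ z ∈ Algebra.adjoin ℤ {t} := by
  have hle : (Algebra.adjoin ℤ {t}).map σ.toIntAlgHom ≤ Algebra.adjoin ℤ {t} := by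
    rw [AlgHom.map_adjoin_singleton]
    refine Algebra.adjoin_singleton_le ?_
    change σ t ∈ _
    rw [hσ]
    exact sub_mem (neg_mem (one_mem _)) (inv_mem_adjoin_of_aeval_shanksPoly ht)
  exact hle ⟨z, hz, rfl⟩

end Order

section Monomials

variable {F : Type*} [Field F]

-- With `e = ρ` this says `w = ± ε^x δ^y`.
def IsSignedMonomial (e : F) (x y : ℤ) (w : F) : Prop :=
  w = e ^ x * (1 + e⁻¹) ^ y ∨ w = -(e ^ x * (1 + e⁻¹) ^ y)

variable {e w : F} {x y : ℤ}

theorem IsSignedMonomial.neg (hw : IsSignedMonomial e x y w) : IsSignedMonomial e x y (-w) := by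
  rcases hw with rfl | rfl
  exacts [Or.inr rfl, Or.inl (neg_neg _)]

theorem IsSignedMonomial.exists_sign (hw : IsSignedMonomial e x y w) :
    ∃ s : F, (s = 1 ∨ s = -1) ∧ w = s * e ^ x * (1 + e⁻¹) ^ y := by
  rcases hw with rfl | rfl
  exacts [⟨1, Or.inl rfl, by ring⟩, ⟨-1, Or.inr rfl, by ring⟩]

theorem IsSignedMonomial.map_ringHom {K : Type*} [Field K] (hw : IsSignedMonomial e x y w)
    (f : F →+* K) : IsSignedMonomial (f e) x y (f w) := by
  rcases hw with rfl | rfl <;> simp [IsSignedMonomial]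

theorem map_zpow_mul_one_add_inv_zpow {G : Type*} [FunLike G F F] [RingHomClass G F F] {σ : G}
    (h0 : e ≠ 0) (h1 : e + 1 ≠ 0) (hσ : σ e = -1 - e⁻¹) (x y : ℤ) :
    σ (e ^ x * (1 + e⁻¹) ^ y) = (-1) ^ x * (e ^ (-y) * (1 + e⁻¹) ^ (x - y)) := by
  have hd : 1 + e⁻¹ ≠ 0 := by
    rw [show 1 + e⁻¹ = (e + 1) / e by field_simp]
    exact div_ne_zero h1 h0
  have hσe : σ e = -1 * (1 + e⁻¹) := by rw [hσ]; ring
  have hσd : σ (1 + e⁻¹) = e⁻¹ * (1 + e⁻¹)⁻¹ := by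
    rw [map_add, map_one, map_inv₀, hσ, show -1 - e⁻¹ = -(1 + e⁻¹) by ring, inv_neg,
      ← sub_eq_add_neg]
    field_simp
    ring
  rw [map_mul, map_zpow₀, map_zpow₀, hσe, hσd, mul_zpow, mul_zpow, inv_zpow', inv_zpow',
    sub_eq_add_neg, zpow_add₀ hd]
  ring

theorem IsSignedMonomial.map {G : Type*} [FunLike G F F] [RingHomClass G F F] {σ : G}
    (hw : IsSignedMonomial e x y w) (h0 : e ≠ 0) (h1 : e + 1 ≠ 0) (hσ : σ e = -1 - e⁻¹) :
    IsSignedMonomial e (-y) (x - y) (σ w) := by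
  have hσw := map_zpow_mul_one_add_inv_zpow h0 h1 hσ x y
  have hsign : ((-1 : F) ^ x = 1 ∨ (-1 : F) ^ x = -1) := by
    rcases Int.even_or_odd x with hx | hx
    exacts [Or.inl hx.neg_one_zpow, Or.inr hx.neg_one_zpow]
  rcases hw with rfl | rfl <;> rcases hsign with hs | hs <;>
    simp [IsSignedMonomial, hσw, hs]

end Monomials

theorem abs_of_isSignedMonomial {ρ w : ℝ} {x y : ℤ} (hρ : 0 < ρ)
    (hw : IsSignedMonomial ρ x y w) : |w| = ρ ^ x * (1 + ρ⁻¹) ^ y := by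
  have hpos : 0 < ρ ^ x * (1 + ρ⁻¹) ^ y := by positivity
  rcases hw with rfl | rfl
  exacts [abs_of_pos hpos, (abs_neg _).trans (abs_of_pos hpos)]

theorem log_abs_of_isSignedMonomial {ρ w : ℝ} {x y : ℤ} (hρ : 0 < ρ)
    (hw : IsSignedMonomial ρ x y w) :
    Real.log |w| = x * Real.log ρ + y * Real.log (1 + ρ⁻¹) := by
  rw [abs_of_isSignedMonomial hρ hw, Real.log_mul (by positivity) (by positivity),
    Real.log_zpow, Real.log_zpow]

-- With `L = log ε` and `D = log δ`, the left-hand sides of `h₀, h₁, h₂` are `log |·|` of the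
-- three conjugates of `±ε^x δ^y`.
theorem max_abs_mul_sub_le_two_mul {x y L D Z : ℝ} (hD : 0 < D) (hDL : D < L)
    (h₀ : x * L + y * D ≤ Z) (h₁ : -y * L + (x - y) * D ≤ Z) (h₂ : (y - x) * L - x * D ≤ Z) :
    max |x| |y| * (L - D) ≤ 2 * Z := by
  rw [max_mul_of_nonneg _ _ (sub_pos.2 hDL).le, max_le_iff]
  rcases le_total 0 x with hx | hx <;> rcases le_total 0 y with hy | hy <;>
    rcases le_total x y with hxy | hxy <;>
    simp only [abs_of_nonneg, abs_of_nonpos, *] <;>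
    constructor <;> nlinarith

theorem log_one_add_inv_lt_log {ρ : ℝ} (hρ : 2 < ρ) : Real.log (1 + ρ⁻¹) < Real.log ρ := by
  have hinv : ρ⁻¹ < 1 := inv_lt_one_of_one_lt₀ (by linarith)
  exact Real.log_lt_log (by positivity) (by linarith)

theorem max_abs_mul_log_sub_log_le {ρ : ℝ} (hρ : 2 < ρ) {σ : ℚ⟮ρ⟯ ≃ₐ[ℚ] ℚ⟮ρ⟯}
    (h0 : rhoGen ρ ≠ 0) (h1 : rhoGen ρ + 1 ≠ 0) (hσ : σ (rhoGen ρ) = -1 - (rhoGen ρ)⁻¹)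
    {w : ℚ⟮ρ⟯} {x y : ℤ} (hw : IsSignedMonomial (rhoGen ρ) x y w) {t : ℝ}
    (ht : ∀ m : ℕ, |(((σ ^ m) w : ℚ⟮ρ⟯) : ℝ)| ≤ t) :
    max |(x : ℝ)| |(y : ℝ)| * (Real.log ρ - Real.log (1 + ρ⁻¹)) ≤ 2 * Real.log t := by
  have hρ0 : 0 < ρ := by linarith
  have hlog : ∀ (m : ℕ) (p q : ℤ), IsSignedMonomial (rhoGen ρ) p q ((σ ^ m) w) →
      p * Real.log ρ + q * Real.log (1 + ρ⁻¹) ≤ Real.log t := by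
    intro m p q h
    have hreal : IsSignedMonomial ρ p q (((σ ^ m) w : ℚ⟮ρ⟯) : ℝ) :=
      h.map_ringHom (ℚ⟮ρ⟯.val : ℚ⟮ρ⟯ →+* ℝ)
    have hpos : 0 < |(((σ ^ m) w : ℚ⟮ρ⟯) : ℝ)| := by
      rw [abs_of_isSignedMonomial hρ0 hreal]; positivity
    rw [← log_abs_of_isSignedMonomial hρ0 hreal]
    exact Real.log_le_log hpos (ht m)
  have h₀ := hlog 0 x y (by simpa using hw)
  have h₁ := hlog 1 _ _ (by simpa using hw.map h0 h1 hσ)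
  have h₂ := hlog 2 _ _ (by simpa [pow_two] using (hw.map h0 h1 hσ).map h0 h1 hσ)
  push_cast at h₁ h₂
  exact max_abs_mul_sub_le_two_mul (Real.log_pos (lt_add_of_pos_right 1 (inv_pos.2 hρ0)))
    (log_one_add_inv_lt_log hρ) h₀ (by linarith) (by linarith)

theorem sup_abs_mul_log_sub_log_le {ρ : ℝ} (hρ : 2 < ρ) {σ : ℚ⟮ρ⟯ ≃ₐ[ℚ] ℚ⟮ρ⟯}
    (h0 : rhoGen ρ ≠ 0) (h1 : rhoGen ρ + 1 ≠ 0) (hσ : σ (rhoGen ρ) = -1 - (rhoGen ρ)⁻¹)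
    {w₁ w₂ : ℚ⟮ρ⟯} {x₁ y₁ x₂ y₂ : ℤ} (hw₁ : IsSignedMonomial (rhoGen ρ) x₁ y₁ w₁)
    (hw₂ : IsSignedMonomial (rhoGen ρ) x₂ y₂ w₂)
    (hmax : ∀ m : ℕ, |(((σ ^ m) w₁ : ℚ⟮ρ⟯) : ℝ)| ≤ |(w₂ : ℝ)| ∧
      |(((σ ^ m) w₂ : ℚ⟮ρ⟯) : ℝ)| ≤ |(w₂ : ℝ)|) :
    ((|x₁| ⊔ |x₂| ⊔ |y₁| ⊔ |y₂| : ℤ) : ℝ) * (Real.log ρ - Real.log (1 + ρ⁻¹)) ≤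
      2 * Real.log |(w₂ : ℝ)| := by
  have hcast : ((|x₁| ⊔ |x₂| ⊔ |y₁| ⊔ |y₂| : ℤ) : ℝ) =
      max (max |(x₁ : ℝ)| |(y₁ : ℝ)|) (max |(x₂ : ℝ)| |(y₂ : ℝ)|) := by
    push_cast
    ac_rfl
  rw [hcast, max_mul_of_nonneg _ _ (sub_nonneg.2 (log_one_add_inv_lt_log hρ).le)]
  exact max_le (max_abs_mul_log_sub_log_le hρ h0 h1 hσ hw₁ fun m => (hmax m).1)
    (max_abs_mul_log_sub_log_le hρ h0 h1 hσ hw₂ fun m => (hmax m).2)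

theorem log_lt_log_sub_log_one_add_inv {a ρ : ℝ} (ha : 0 < a) (hρ : a + 1 < ρ) :
    Real.log a < Real.log ρ - Real.log (1 + ρ⁻¹) := by
  have hρ0 : 0 < ρ := by linarith
  rw [← Real.log_div hρ0.ne' (by positivity)]
  refine Real.log_lt_log ha ((lt_div_iff₀ (by positivity)).2 ?_)
  have : a * ρ⁻¹ < 1 := by rw [← div_eq_mul_inv, div_lt_one hρ0]; linarith
  linarith [mul_add a 1 ρ⁻¹]

theorem rpow_half_le_and_lt_of_mul_le {a t c X : ℝ} (ha : 0 < a) (ht : 0 < t) (hX : 0 ≤ X)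
    (hc : Real.log a < c) (h : X * c ≤ 2 * Real.log t) :
    a ^ (X / 2) ≤ t ∧ (1 ≤ X → a ^ (X / 2) < t) := by
  rw [Real.rpow_le_iff_le_log ha ht, Real.rpow_lt_iff_lt_log ha ht]
  exact ⟨by nlinarith, fun hX1 => by nlinarith⟩

end SimplestCubic

open SimplestCubic

section Solutions

variable {a : ℤ} {ρ : ℝ} {u₁ u₂ : ℚ⟮ρ⟯} {n : ℤ}

theorem IsZrhoUnit.neg {u : ℚ⟮ρ⟯} (hu : IsZrhoUnit ρ u) : IsZrhoUnit ρ (-u) := by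
  obtain ⟨hu, v, hv, huv⟩ := hu
  exact ⟨neg_mem hu, -v, neg_mem hv, by rw [neg_mul_neg, huv]⟩

theorem IsZrhoUnit.ne_zero {u : ℚ⟮ρ⟯} (hu : IsZrhoUnit ρ u) : u ≠ 0 := by
  obtain ⟨-, v, -, huv⟩ := hu
  exact left_ne_zero_of_mul_eq_one huv

theorem IsZrhoUnit.map {u : ℚ⟮ρ⟯} (hu : IsZrhoUnit ρ u) (σ : ℚ⟮ρ⟯ ≃ₐ[ℚ] ℚ⟮ρ⟯)
    (hσ : ∀ z ∈ Zrho ρ, σ z ∈ Zrho ρ) : IsZrhoUnit ρ (σ u) := by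
  obtain ⟨hu, v, hv, huv⟩ := hu
  exact ⟨hσ u hu, σ v, hσ v hv, by rw [← map_mul, huv, map_one]⟩

theorem IsSolution.neg (h : IsSolution a ρ u₁ u₂ n) : IsSolution a ρ (-u₁) (-u₂) (-n) := by
  obtain ⟨h₁, h₂, hn, hsum⟩ := h
  refine ⟨IsZrhoUnit.neg h₁, IsZrhoUnit.neg h₂, by rwa [Int.cast_neg, abs_neg], ?_⟩
  push_cast
  rw [← hsum, neg_add]

theorem IsSolution.swap (h : IsSolution a ρ u₁ u₂ n) : IsSolution a ρ u₂ u₁ n := by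
  obtain ⟨h₁, h₂, hn, hsum⟩ := h
  exact ⟨h₂, h₁, hn, by rw [add_comm, hsum]⟩

theorem IsSolution.map (h : IsSolution a ρ u₁ u₂ n) (σ : ℚ⟮ρ⟯ ≃ₐ[ℚ] ℚ⟮ρ⟯)
    (hσ : ∀ z ∈ Zrho ρ, σ z ∈ Zrho ρ) : IsSolution a ρ (σ u₁) (σ u₂) n := by
  obtain ⟨h₁, h₂, hn, hsum⟩ := h
  exact ⟨IsZrhoUnit.map h₁ σ hσ, IsZrhoUnit.map h₂ σ hσ, hn, by rw [← map_add, hsum, map_intCast]⟩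

end Solutions

section Representative

variable {a : ℤ} {ρ : ℝ} {u₁ u₂ : ℚ⟮ρ⟯} {n : ℤ}

theorem solEquiv_pow_apply (σ : ℚ⟮ρ⟯ ≃ₐ[ℚ] ℚ⟮ρ⟯) (u₁ u₂ : ℚ⟮ρ⟯) (n : ℤ) (k : ℕ) :
    SolEquiv ρ (u₁, u₂, n) ((σ ^ k) u₁, (σ ^ k) u₂, n) := by
  induction k with
  | zero => exact .refl
  | succ k ih =>
    rw [pow_succ', AlgEquiv.mul_apply, AlgEquiv.mul_apply]
    exact ih.tail (.galois σ _ _ n)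

theorem IsSolution.pow_map {σ : ℚ⟮ρ⟯ ≃ₐ[ℚ] ℚ⟮ρ⟯} (h : IsSolution a ρ u₁ u₂ n) (hσ : ∀ z ∈ Zrho ρ, σ z ∈ Zrho ρ)
    (k : ℕ) : IsSolution a ρ ((σ ^ k) u₁) ((σ ^ k) u₂) n := by
  induction k with
  | zero => exact h
  | succ k ih =>
    rw [pow_succ', AlgEquiv.mul_apply, AlgEquiv.mul_apply]
    exact ih.map σ hσ

theorem exists_solEquiv_abs_pow_apply_le {σ : ℚ⟮ρ⟯ ≃ₐ[ℚ] ℚ⟮ρ⟯} (hσ3 : σ ^ 3 = 1) (hσ : ∀ z ∈ Zrho ρ, σ z ∈ Zrho ρ)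
    (hsol : IsSolution a ρ u₁ u₂ n) :
    ∃ w₁ w₂ : ℚ⟮ρ⟯, IsSolution a ρ w₁ w₂ n ∧ SolEquiv ρ (u₁, u₂, n) (w₁, w₂, n) ∧
      ∀ m : ℕ, |(((σ ^ m) w₁ : ℚ⟮ρ⟯) : ℝ)| ≤ |(w₂ : ℝ)| ∧
        |(((σ ^ m) w₂ : ℚ⟮ρ⟯) : ℝ)| ≤ |(w₂ : ℝ)| := by
  set g : ℕ → ℝ := fun k => max |(((σ ^ k) u₁ : ℚ⟮ρ⟯) : ℝ)| |(((σ ^ k) u₂ : ℚ⟮ρ⟯) : ℝ)|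
  obtain ⟨k, -, hk⟩ := (Finset.range 3).exists_max_image g ⟨0, by simp⟩
  have hg : ∀ m, g (m + k) ≤ g k := fun m => by
    simpa only [g, ← pow_eq_pow_mod _ hσ3] using
      hk _ (Finset.mem_range.2 (Nat.mod_lt (m + k) three_pos))
  have hpow : ∀ m u, (σ ^ m) ((σ ^ k) u) = (σ ^ (m + k)) u := by
    intro m u
    rw [pow_add, AlgEquiv.mul_apply]
  rcases le_total |(((σ ^ k) u₁ : ℚ⟮ρ⟯) : ℝ)| |(((σ ^ k) u₂ : ℚ⟮ρ⟯) : ℝ)| with hle | hle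
  · refine ⟨(σ ^ k) u₁, (σ ^ k) u₂, hsol.pow_map hσ k, solEquiv_pow_apply σ u₁ u₂ n k,
      fun m => ?_⟩
    rw [hpow, hpow, ← max_eq_right hle]
    exact ⟨(le_max_left _ _).trans (hg m), (le_max_right _ _).trans (hg m)⟩
  · refine ⟨(σ ^ k) u₂, (σ ^ k) u₁, (hsol.pow_map hσ k).swap,
      (solEquiv_pow_apply σ u₁ u₂ n k).tail (.swap _ _ n), fun m => ?_⟩
    rw [hpow, hpow, ← max_eq_left hle]
    exact ⟨(le_max_right _ _).trans (hg m), (le_max_left _ _).trans (hg m)⟩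

end Representative

theorem exists_solEquiv_fst_eq_monomial {a : ℤ} {ρ : ℝ} {w₁ w₂ : ℚ⟮ρ⟯} {n : ℤ}
    {x₁ y₁ x₂ y₂ : ℤ} (hsol : IsSolution a ρ w₁ w₂ n)
    (hw₁ : IsSignedMonomial (rhoGen ρ) x₁ y₁ w₁) (hw₂ : IsSignedMonomial (rhoGen ρ) x₂ y₂ w₂) :
    ∃ (v₁ v₂ : ℚ⟮ρ⟯) (m : ℤ), IsSolution a ρ v₁ v₂ m ∧ SolEquiv ρ (w₁, w₂, n) (v₁, v₂, m) ∧
      v₁ = rhoGen ρ ^ x₁ * (1 + (rhoGen ρ)⁻¹) ^ y₁ ∧ IsSignedMonomial (rhoGen ρ) x₂ y₂ v₂ ∧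
      |(v₂ : ℝ)| = |(w₂ : ℝ)| := by
  rcases hw₁ with rfl | rfl
  · exact ⟨_, _, _, hsol, .refl, rfl, hw₂, rfl⟩
  · refine ⟨_, _, _, hsol.neg, .single (.neg _ _ _), neg_neg _, hw₂.neg, ?_⟩
    rw [IntermediateField.coe_neg, abs_neg]

theorem good_equivalent_solution (a : ℤ) (ha : 100 < a) (ρ : ℝ)
    (hroot : ρ ^ 3 - (a : ℝ) * ρ ^ 2 - ((a : ℝ) + 3) * ρ - 1 = 0)
    (hρ₁ : (a : ℝ) + 1 < ρ)
    (hThomas : ∀ u : ℚ⟮ρ⟯, IsZrhoUnit ρ u → ∃ x y : ℤ,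
      u = (rhoGen ρ) ^ x * (1 + (rhoGen ρ)⁻¹) ^ y ∨
      u = -((rhoGen ρ) ^ x * (1 + (rhoGen ρ)⁻¹) ^ y))
    (u₁ u₂ : ℚ⟮ρ⟯) (n : ℤ) (hsol : IsSolution a ρ u₁ u₂ n) :
    ∃ (v₁ v₂ : ℚ⟮ρ⟯) (m : ℤ),
      IsSolution a ρ v₁ v₂ m ∧
      SolEquiv ρ (u₁, u₂, n) (v₁, v₂, m) ∧
      ∃ (x₁ y₁ x₂ y₂ : ℤ) (s : ℚ⟮ρ⟯), (s = 1 ∨ s = -1) ∧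
        v₁ = (rhoGen ρ) ^ x₁ * (1 + (rhoGen ρ)⁻¹) ^ y₁ ∧
        v₂ = s * (rhoGen ρ) ^ x₂ * (1 + (rhoGen ρ)⁻¹) ^ y₂ ∧
        (a : ℝ) ^ (((|x₁| ⊔ |x₂| ⊔ |y₁| ⊔ |y₂| : ℤ) : ℝ) / 2) ≤ |(v₂ : ℝ)| ∧
        (1 ≤ |x₁| ⊔ |x₂| ⊔ |y₁| ⊔ |y₂| →
          (a : ℝ) ^ (((|x₁| ⊔ |x₂| ⊔ |y₁| ⊔ |y₂| : ℤ) : ℝ) / 2) < |(v₂ : ℝ)|) := by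
  have ha0 : (0 : ℝ) < a := by exact_mod_cast (by omega : 0 < a)
  have hρ : 2 < ρ := by linarith [(by exact_mod_cast ha : (100 : ℝ) < a)]
  have hα : aeval ρ (shanksPoly a) = 0 := by rwa [aeval_shanksPoly]
  have hg : aeval (rhoGen ρ) (shanksPoly a) = 0 := aeval_gen_shanksPoly hα
  obtain ⟨h0, h1⟩ := ne_zero_and_add_one_ne_zero_of_aeval_shanksPoly hg
  obtain ⟨σ, hσ⟩ := exists_algEquiv_gen_eq_neg_one_sub_inv hα
  have hσZ : ∀ z ∈ Zrho ρ, σ z ∈ Zrho ρ := fun z hz =>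
    map_mem_adjoin_of_aeval_shanksPoly hg (σ : ℚ⟮ρ⟯ →+* ℚ⟮ρ⟯) hσ hz
  obtain ⟨w₁, w₂, hsolw, hequiv, hmax⟩ :=
    exists_solEquiv_abs_pow_apply_le (algEquiv_pow_three_eq_one hα σ hσ) hσZ hsol
  obtain ⟨x₁, y₁, hw₁⟩ := hThomas w₁ hsolw.1
  obtain ⟨x₂, y₂, hw₂⟩ := hThomas w₂ hsolw.2.1
  obtain ⟨v₁, v₂, m, hsolv, hequiv', hv₁, hv₂, habs⟩ :=
    exists_solEquiv_fst_eq_monomial hsolw hw₁ hw₂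
  obtain ⟨s, hs, hv₂s⟩ := hv₂.exists_sign
  obtain ⟨hle, hlt⟩ := rpow_half_le_and_lt_of_mul_le ha0
    (abs_pos.2 (by exact_mod_cast hsolw.2.1.ne_zero)) (by positivity)
    (log_lt_log_sub_log_one_add_inv ha0 hρ₁)
    (sup_abs_mul_log_sub_log_le hρ h0 h1 hσ hw₁ hw₂ hmax)
  exact ⟨v₁, v₂, m, hsolv, hequiv.trans hequiv', x₁, y₁, x₂, y₂, s, hs, hv₁, hv₂s,
    habs ▸ hle, fun h => habs ▸ hlt (by exact_mod_cast h)⟩
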